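/- Fix a ∈ ℝ with a ≠ 0, α > 0 with α|a| ≤ 1, and let M = e₁e₂ᵀ + e₂e₁ᵀ. Let s = sign(a), u_a = (e₁+se₂)/√2. For a unit vector w decomposed as w = c·u_a + b·u_{-a} + v with v ⟂ span{e₁,e₂} and c ≠ 0, define w⁺ = (I+αaM)w/‖(I+αaM)w‖₂ and r(w) = √(1−⟨w,u_a⟩²)/|⟨w,u_a⟩|. Then r(w⁺) ≤ r(w)/(1+α|a|). -/

import Mathlib

open Matrix Finset

set_option maxHeartbeats 1000000 in
/-- Population power-iteration contraction. For `a ≠ 0`, `α > 0`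
with `α|a| ≤ 1`, `M = e₁e₂ᵀ + e₂e₁ᵀ`, `s = sign(a)`, `u_a = (e₁+s·e₂)/√2`, and
a unit vector `w` with nonzero component `c = ⟨w,u_a⟩` along `u_a`
(`w = c·u_a + b·u_{-a} + v`, `v ⟂ span{e₁,e₂}`), setting
`w⁺ = (I+αaM)w/‖(I+αaM)w‖₂` and `r(w) = √(1−⟨w,u_a⟩²)/|⟨w,u_a⟩|`,
we have `r(w⁺) ≤ r(w)/(1+α|a|)`. -/
theorem population_contraction (d : ℕ) (hd : 2 ≤ d)
    (a α : ℝ) (ha : a ≠ 0) (hα : 0 < α) (hαa : α * |a| ≤ 1)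
    (M : Matrix (Fin d) (Fin d) ℝ)
    (hM : M = Matrix.single ⟨0, by omega⟩ ⟨1, by omega⟩ (1 : ℝ)
            + Matrix.single ⟨1, by omega⟩ ⟨0, by omega⟩ (1 : ℝ))
    (ua : Fin d → ℝ)
    (hua : ua = fun i => if i = ⟨0, by omega⟩ then (Real.sqrt 2)⁻¹
                  else if i = ⟨1, by omega⟩ then Real.sign a * (Real.sqrt 2)⁻¹ else 0)
    (w : Fin d → ℝ) (hw : ∑ i, w i ^ 2 = 1)
    (hc : ∑ i, w i * ua i ≠ 0)
    (wp : Fin d → ℝ)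
    (hwp : wp = (Real.sqrt (∑ i,
        ((((1 : Matrix (Fin d) (Fin d) ℝ) + (α * a) • M) *ᵥ w) i) ^ 2))⁻¹
        • (((1 : Matrix (Fin d) (Fin d) ℝ) + (α * a) • M) *ᵥ w)) :
    Real.sqrt (1 - (∑ i, wp i * ua i) ^ 2) / |∑ i, wp i * ua i|
      ≤ (Real.sqrt (1 - (∑ i, w i * ua i) ^ 2) / |∑ i, w i * ua i|) / (1 + α * |a|) := by
  have h0d : 0 < d := by omega
  have h1d : 1 < d := by omega
  set i0 : Fin d := ⟨0, h0d⟩ with hi0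
  set i1 : Fin d := ⟨1, h1d⟩ with hi1
  have h01 : i0 ≠ i1 := by
    simp [hi0, hi1, Fin.ext_iff]
  have hM' : M = Matrix.single i0 i1 (1 : ℝ)
      + Matrix.single i1 i0 (1 : ℝ) := hM
  set s : ℝ := Real.sign a with hs_def
  have hua' : ua = fun i => if i = i0 then (Real.sqrt 2)⁻¹
      else if i = i1 then s * (Real.sqrt 2)⁻¹ else 0 := hua
  set S : ℝ := Real.sqrt 2 with hS_def
  have hS0 : S ≠ 0 := by
    rw [hS_def]
    positivity
  have hSi : S⁻¹ ^ 2 = 1 / 2 := by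
    rw [inv_pow, hS_def, Real.sq_sqrt (by norm_num : (0:ℝ) ≤ 2)]
    norm_num
  have hcase : (s = 1 ∧ |a| = a) ∨ (s = -1 ∧ |a| = -a) := by
    rcases lt_trichotomy a 0 with h | h | h
    · exact Or.inr ⟨Real.sign_of_neg h, abs_of_neg h⟩
    · exact absurd h ha
    · exact Or.inl ⟨Real.sign_of_pos h, abs_of_pos h⟩
  set t : ℝ := α * |a| with ht_def
  clear_value s S
  have ht0 : 0 < t := by
    rw [ht_def]
    exact mul_pos hα (abs_pos.mpr ha)
  have ht1 : t ≤ 1 := hαa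
  clear_value t
  -- sum splitting
  have hsplit : ∀ f : Fin d → ℝ,
      ∑ i, f i = f i0 + f i1 + ∑ i ∈ univ \ {i0, i1}, f i := by
    intro f
    rw [← Finset.sum_sdiff (Finset.subset_univ ({i0, i1} : Finset (Fin d))),
      Finset.sum_pair h01]
    ring
  have hmem : ∀ i ∈ univ \ ({i0, i1} : Finset (Fin d)), i ≠ i0 ∧ i ≠ i1 := by
    intro i hi
    simp only [Finset.mem_sdiff, Finset.mem_insert, Finset.mem_singleton] at hi
    exact ⟨fun h => hi.2 (Or.inl h), fun h => hi.2 (Or.inr h)⟩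
  -- values of ua
  have hua0 : ua i0 = S⁻¹ := by rw [hua']; simp
  have hua1 : ua i1 = s * S⁻¹ := by rw [hua']; simp [h01.symm]
  have huaz : ∀ i, i ≠ i0 → i ≠ i1 → ua i = 0 := by
    intro i h1 h2
    rw [hua']
    simp [h1, h2]
  set c : ℝ := ∑ i, w i * ua i with hc_def
  set b : ℝ := (w i0 - s * w i1) * S⁻¹ with hb_def
  have hcval : c = (w i0 + s * w i1) * S⁻¹ := by
    rw [hc_def, hsplit, hua0, hua1,
      Finset.sum_eq_zero (fun i hi => by rw [huaz i (hmem i hi).1 (hmem i hi).2, mul_zero])]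
    ring
  clear_value c
  set V : ℝ := ∑ i ∈ univ \ ({i0, i1} : Finset (Fin d)), w i ^ 2 with hV_def
  have hV0 : 0 ≤ V := Finset.sum_nonneg fun i _ => sq_nonneg _
  have hwsum : w i0 ^ 2 + w i1 ^ 2 + V = 1 := by
    rw [← hw, hsplit (fun i => w i ^ 2)]
  clear_value b V
  -- the vector y
  set y : Fin d → ℝ := ((1 : Matrix (Fin d) (Fin d) ℝ) + (α * a) • M) *ᵥ w with hy_def
  have hyi : ∀ i, y i = w i + (α * a) *
      ((if i = i0 then w i1 else 0) + (if i = i1 then w i0 else 0)) := by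
    intro i
    rw [hy_def, hM']
    simp [Matrix.add_mulVec, Matrix.smul_mulVec, Matrix.one_mulVec,
      Matrix.single_mulVec, Function.update_apply, mul_add]
  have hy0 : y i0 = w i0 + (α * a) * w i1 := by
    rw [hyi, if_pos rfl, if_neg h01]; ring
  have hy1 : y i1 = w i1 + (α * a) * w i0 := by
    rw [hyi, if_neg (Ne.symm h01), if_pos rfl]; ring
  have hyz : ∀ i, i ≠ i0 → i ≠ i1 → y i = w i := by
    intro i h1 h2
    rw [hyi]
    simp [h1, h2]
  clear_value y
  -- key algebraic identities
  have keyA : y i0 ^ 2 + y i1 ^ 2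
      = (1 + t) ^ 2 * c ^ 2 + (1 - t) ^ 2 * b ^ 2 := by
    rw [hy0, hy1, hcval, hb_def, mul_pow, mul_pow, hSi, ht_def]
    rcases hcase with ⟨h1, h2⟩ | ⟨h1, h2⟩ <;> rw [h1, h2] <;> ring
  have keyB : y i0 + s * y i1 = (1 + t) * (w i0 + s * w i1) := by
    rw [hy0, hy1, ht_def]
    rcases hcase with ⟨h1, h2⟩ | ⟨h1, h2⟩ <;> rw [h1, h2] <;> ring
  have keyC : c ^ 2 + b ^ 2 = w i0 ^ 2 + w i1 ^ 2 := by
    rw [hcval, hb_def, mul_pow, mul_pow, hSi]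
    rcases hcase with ⟨h1, h2⟩ | ⟨h1, h2⟩ <;> rw [h1] <;> ring
  -- the squared norm of y
  set n2 : ℝ := ∑ i, y i ^ 2 with hn2_def
  have hn2 : n2 = (1 + t) ^ 2 * c ^ 2 + (1 - t) ^ 2 * b ^ 2 + V := by
    rw [hn2_def, hsplit (fun i => y i ^ 2)]
    have htail : ∑ i ∈ univ \ ({i0, i1} : Finset (Fin d)), y i ^ 2 = V := by
      rw [hV_def]
      exact Finset.sum_congr rfl fun i hi => by
        rw [hyz i (hmem i hi).1 (hmem i hi).2]
    rw [htail, keyA]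
  clear_value n2
  have hc2 : 0 < c ^ 2 := (sq_nonneg c).lt_of_ne (Ne.symm (pow_ne_zero 2 hc))
  have hn2pos : 0 < n2 := by
    rw [hn2]
    have h1 : 0 < (1 + t) ^ 2 * c ^ 2 := mul_pos (pow_pos (add_pos one_pos ht0) 2) hc2
    have h2 : 0 ≤ (1 - t) ^ 2 * b ^ 2 := mul_nonneg (sq_nonneg _) (sq_nonneg _)
    exact add_pos_of_pos_of_nonneg (add_pos_of_pos_of_nonneg h1 h2) hV0
  set L : ℝ := Real.sqrt n2 with hL_def
  have hL : 0 < L := Real.sqrt_pos.mpr hn2pos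

  have hL2 : L ^ 2 = n2 := Real.sq_sqrt hn2pos.le
  -- cp
  set cp : ℝ := ∑ i, wp i * ua i with hcp_def
  have hcp : cp = L⁻¹ * ((1 + t) * c) := by
    rw [hcp_def, hwp]
    have : ∑ i, ((Real.sqrt n2)⁻¹ • y) i * ua i = L⁻¹ * ∑ i, y i * ua i := by
      rw [Finset.mul_sum]
      exact Finset.sum_congr rfl fun i _ => by
        simp [hL_def, mul_assoc]
    rw [this, hsplit (fun i => y i * ua i), hua0, hua1,
      Finset.sum_eq_zero (fun i hi => by rw [huaz i (hmem i hi).1 (hmem i hi).2, mul_zero])]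
    rw [hcval]
    have : y i0 * S⁻¹ + y i1 * (s * S⁻¹) + 0 = (y i0 + s * y i1) * S⁻¹ := by ring
    rw [this, keyB]
    ring
  have h1c : 1 - c ^ 2 = b ^ 2 + V := by
    linear_combination - hwsum - keyC
  have hcpsq : cp ^ 2 * n2 = (1 + t) ^ 2 * c ^ 2 := by
    rw [hcp, ← hL2]
    field_simp
  have h1cp : 1 - cp ^ 2 = ((1 - t) ^ 2 * b ^ 2 + V) / n2 := by
    rw [eq_div_iff hn2pos.ne']
    linear_combination hn2 - hcpsq
  have habs : |cp| = L⁻¹ * ((1 + t) * |c|) := by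
    rw [hcp, abs_mul, abs_mul, abs_inv, abs_of_pos hL,
      abs_of_pos (add_pos one_pos ht0)]
  -- put everything together
  clear_value cp
  set A : ℝ := Real.sqrt ((1 - t) ^ 2 * b ^ 2 + V) with hA_def
  set B : ℝ := Real.sqrt (b ^ 2 + V) with hB_def
  have hAB : A ≤ B := by
    apply Real.sqrt_le_sqrt
    apply add_le_add_left
    have h2t : 0 ≤ t * (2 - t) :=
      mul_nonneg ht0.le (sub_nonneg.mpr (ht1.trans one_le_two))
    have h1 : (1 - t) ^ 2 ≤ 1 := by
      calc (1 - t) ^ 2 = 1 - t * (2 - t) := by ring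
        _ ≤ 1 := sub_le_self 1 h2t
    calc (1 - t) ^ 2 * b ^ 2 ≤ 1 * b ^ 2 := mul_le_mul_of_nonneg_right h1 (sq_nonneg b)
      _ = b ^ 2 := one_mul _
  have hsq : Real.sqrt (1 - cp ^ 2) = A / L := by
    rw [h1cp, Real.sqrt_div (show (0:ℝ) ≤ (1 - t) ^ 2 * b ^ 2 + V by positivity),
      hA_def, hL_def]
  rw [h1c, hsq, habs]
  have hcabs : 0 < |c| := abs_pos.mpr hc
  have hLHS : A / L / (L⁻¹ * ((1 + t) * |c|)) = A / ((1 + t) * |c|) := by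
    field_simp
  have hRHS : B / |c| / (1 + t) = B / ((1 + t) * |c|) := by
    rw [div_div, mul_comm]
  rw [hLHS, hRHS]
  exact (div_le_div_iff_of_pos_right (mul_pos (add_pos one_pos ht0) hcabs)).mpr hAB
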